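/- Let $0 < r < R$, $\varepsilon > 0$ small, and let $V \in L^2(\mathbb{R}^3)^4$ be a solenoidal vector field with $\hat V$ supported in $\mathcal{C}_{r,R}$ and lying pointwise in the span of the eigenvectors $E_0(\xi), E_+^\varepsilon(\xi), E_-^\varepsilon(\xi)$. Then for $i \in \{0,+,-\}$ the spectral projections satisfy $\|\mathbb{P}_{i,\varepsilon} V\|_{L^2(\mathbb{R}^3)} \le C_{r,R} \|V\|_{L^2(\mathbb{R}^3)}$, where $C_{r,R}$ depends only on $r, R, \nu, \nu'$ and is bounded by $C(1 + R^N/r^N)$ for some finite $N$. -/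

import Mathlib

/-!
On `𝒞_{r,R}` the change of basis to `(E₀, E₊^ε, E₋^ε)` is inverted by hand. `E₀` is orthogonal
to both `E_±^ε`, so Pythagoras bounds the `E₀`-component by `V̂` itself. The last two
coordinates of `V̂` are `k₊ + k₋` and `-i (|ξ_h|/|ξ|) (k₊ 𝒮⁺ - k₋ 𝒮⁻)`; since
`𝒮⁺ + 𝒮⁻ = 2 S_ε`, this `2 × 2` system gives `2 S_ε k_±` as a combination of them with
coefficients of modulus `|𝒮^∓| = 1` and `|ξ|/|ξ_h| ≤ R/r`. With `S_ε ≥ 1/2` and `‖E_±^ε‖ = √2`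
every component is pointwise at most `2 (1 + R/r) |V̂(ξ)|`, and integrating gives `N = 1`.
-/

open MeasureTheory
open scoped ENNReal

noncomputable section

/-- `S_ε(ξ) = √(1 - ε²(ν-ν')²|ξ|⁶/(4|ξ_h|²))`. -/
def Sfun (ε ν ν' : ℝ) (ξ : EuclideanSpace ℝ (Fin 3)) : ℝ :=
  Real.sqrt (1 - ε ^ 2 * (ν - ν') ^ 2 * ‖ξ‖ ^ 6 / (4 * ((ξ 0) ^ 2 + (ξ 1) ^ 2)))

/-- `𝒮_ε^±(ξ) = S_ε(ξ) ± (i/2) ε (ν-ν') |ξ|³ / |ξ_h|` (sign `σ = ±1`). -/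
def ScalS (σ ε ν ν' : ℝ) (ξ : EuclideanSpace ℝ (Fin 3)) : ℂ :=
  (Sfun ε ν ν' ξ : ℂ) + (σ : ℂ) * Complex.I *
    ((ε * (ν - ν') * ‖ξ‖ ^ 3 / (2 * Real.sqrt ((ξ 0) ^ 2 + (ξ 1) ^ 2)) : ℝ) : ℂ)

/-- The non-oscillating eigenvector `E₀(ξ) = |ξ_h|⁻¹ (-ξ₂, ξ₁, 0, 0)ᵀ`. -/
def E0v (ξ : EuclideanSpace ℝ (Fin 3)) : EuclideanSpace ℂ (Fin 4) :=
  (WithLp.equiv 2 (Fin 4 → ℂ)).symm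
    ![((-(ξ 1) / Real.sqrt ((ξ 0) ^ 2 + (ξ 1) ^ 2) : ℝ) : ℂ),
      (((ξ 0) / Real.sqrt ((ξ 0) ^ 2 + (ξ 1) ^ 2) : ℝ) : ℂ), 0, 0]

/-- The oscillating eigenvectors `E_±^ε(ξ)` (sign `σ = ±1`). -/
def Epm (σ ε ν ν' : ℝ) (ξ : EuclideanSpace ℝ (Fin 3)) : EuclideanSpace ℂ (Fin 4) :=
  (WithLp.equiv 2 (Fin 4 → ℂ)).symm
    ![(σ : ℂ) * Complex.I *
        (((ξ 2) * (ξ 0) / (‖ξ‖ * Real.sqrt ((ξ 0) ^ 2 + (ξ 1) ^ 2)) : ℝ) : ℂ) * ScalS σ ε ν ν' ξ,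
      (σ : ℂ) * Complex.I *
        (((ξ 2) * (ξ 1) / (‖ξ‖ * Real.sqrt ((ξ 0) ^ 2 + (ξ 1) ^ 2)) : ℝ) : ℂ) * ScalS σ ε ν ν' ξ,
      -(σ : ℂ) * Complex.I *
        ((Real.sqrt ((ξ 0) ^ 2 + (ξ 1) ^ 2) / ‖ξ‖ : ℝ) : ℂ) * ScalS σ ε ν ν' ξ,
      1]

local notation "‖" ξ "‖ₕ" => Real.sqrt ((ξ 0) ^ 2 + (ξ 1) ^ 2)

section Geometry

variable (ξ : EuclideanSpace ℝ (Fin 3))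

lemma sq_horizNorm : ‖ξ‖ₕ ^ 2 = ξ 0 ^ 2 + ξ 1 ^ 2 :=
  Real.sq_sqrt (by positivity)

lemma norm_sq_fin_three : ‖ξ‖ ^ 2 = ξ 0 ^ 2 + ξ 1 ^ 2 + ξ 2 ^ 2 := by
  simp [EuclideanSpace.real_norm_sq_eq, Fin.sum_univ_three]

lemma horizNorm_le_norm : ‖ξ‖ₕ ≤ ‖ξ‖ :=
  (Real.sqrt_le_left (norm_nonneg ξ)).2 (by rw [norm_sq_fin_three]; nlinarith [sq_nonneg (ξ 2)])

end Geometry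

section Eigenvectors

variable {σ ε ν ν' : ℝ} {ξ : EuclideanSpace ℝ (Fin 3)}

lemma ScalS_one_add_ScalS_neg_one :
    ScalS 1 ε ν ν' ξ + ScalS (-1) ε ν ν' ξ = 2 * Sfun ε ν ν' ξ := by
  simp only [ScalS]; push_cast; ring

lemma norm_ScalS (hσ : |σ| = 1) (hS : 0 < Sfun ε ν ν' ξ) : ‖ScalS σ ε ν ν' ξ‖ = 1 := by
  set q := ε ^ 2 * (ν - ν') ^ 2 * ‖ξ‖ ^ 6 / (4 * ((ξ 0) ^ 2 + (ξ 1) ^ 2))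
  set b := ε * (ν - ν') * ‖ξ‖ ^ 3 / (2 * ‖ξ‖ₕ)
  have hσ2 : σ ^ 2 = 1 := by rw [← sq_abs, hσ, one_pow]
  have hq : q < 1 := by simpa [Sfun, q] using hS
  have hSsq : Sfun ε ν ν' ξ ^ 2 = 1 - q := Real.sq_sqrt (by linarith)
  have hbsq : b ^ 2 = q := by simp only [b, q, div_pow, mul_pow, sq_horizNorm]; ring
  have hsq : ‖ScalS σ ε ν ν' ξ‖ ^ 2 = 1 := by
    rw [Complex.sq_norm, Complex.normSq_apply]
    simp only [ScalS, Complex.add_re, Complex.add_im, Complex.mul_re, Complex.mul_im,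
      Complex.ofReal_re, Complex.ofReal_im, Complex.I_re, Complex.I_im]
    linear_combination hSsq + q * hσ2 + σ ^ 2 * hbsq
  exact (pow_eq_one_iff_of_nonneg (norm_nonneg _) two_ne_zero).1 hsq

lemma inner_E0v_Epm : inner ℂ (E0v ξ) (Epm σ ε ν ν' ξ) = 0 := by
  simp [PiLp.inner_apply, Fin.sum_univ_four, E0v, Epm]
  ring

lemma sq_norm_Epm (hσ : |σ| = 1) (hS : 0 < Sfun ε ν ν' ξ) (hξ : 0 < ‖ξ‖ₕ) :
    ‖Epm σ ε ν ν' ξ‖ ^ 2 = 2 := by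
  have hn : 0 < ‖ξ‖ := hξ.trans_le (horizNorm_le_norm ξ)
  simp only [EuclideanSpace.norm_sq_eq, Fin.sum_univ_four, Epm]
  simp [norm_ScalS hσ hS, hσ, div_pow, mul_pow]
  field_simp
  linear_combination (‖ξ‖ₕ ^ 2 - ξ 2 ^ 2) * sq_horizNorm ξ - ‖ξ‖ₕ ^ 2 * norm_sq_fin_three ξ

def eigenExpansion (ε ν ν' : ℝ) (k0 kp km : ℂ) (ξ : EuclideanSpace ℝ (Fin 3)) :
    EuclideanSpace ℂ (Fin 4) :=
  k0 • E0v ξ + kp • Epm 1 ε ν ν' ξ + km • Epm (-1) ε ν ν' ξ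

variable {k0 kp km : ℂ}

lemma norm_smul_E0v_le_norm_eigenExpansion :
    ‖k0 • E0v ξ‖ ≤ ‖eigenExpansion ε ν ν' k0 kp km ξ‖ := by
  have horth : inner ℂ (k0 • E0v ξ) (kp • Epm 1 ε ν ν' ξ + km • Epm (-1) ε ν ν' ξ) = 0 := by
    simp [inner_E0v_Epm]
  have hpyth := norm_add_sq_eq_norm_sq_add_norm_sq_of_inner_eq_zero _ _ horth
  rw [eigenExpansion, add_assoc, mul_self_le_mul_self_iff (norm_nonneg _) (norm_nonneg _), hpyth]
  exact le_add_of_nonneg_right (mul_self_nonneg _)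

lemma eigenExpansion_three : eigenExpansion ε ν ν' k0 kp km ξ 3 = kp + km := by
  simp [eigenExpansion, E0v, Epm]

lemma eigenExpansion_two : eigenExpansion ε ν ν' k0 kp km ξ 2 =
    -Complex.I * ((‖ξ‖ₕ / ‖ξ‖ : ℝ) : ℂ) * (kp * ScalS 1 ε ν ν' ξ - km * ScalS (-1) ε ν ν' ξ) := by
  simp [eigenExpansion, E0v, Epm]
  ring

lemma two_mul_Sfun_mul_kp (hξ : 0 < ‖ξ‖ₕ) :
    2 * Sfun ε ν ν' ξ * kp = eigenExpansion ε ν ν' k0 kp km ξ 3 * ScalS (-1) ε ν ν' ξ +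
      Complex.I * ((‖ξ‖ / ‖ξ‖ₕ : ℝ) : ℂ) * eigenExpansion ε ν ν' k0 kp km ξ 2 := by
  have hn : ((‖ξ‖ : ℝ) : ℂ) ≠ 0 := by exact_mod_cast (hξ.trans_le (horizNorm_le_norm ξ)).ne'
  have hh : ((‖ξ‖ₕ : ℝ) : ℂ) ≠ 0 := by exact_mod_cast hξ.ne'
  rw [eigenExpansion_three, eigenExpansion_two, ← ScalS_one_add_ScalS_neg_one]
  push_cast
  field_simp
  linear_combination (kp * ScalS 1 ε ν ν' ξ - km * ScalS (-1) ε ν ν' ξ) * Complex.I_sq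

lemma two_mul_Sfun_mul_km (hξ : 0 < ‖ξ‖ₕ) :
    2 * Sfun ε ν ν' ξ * km = eigenExpansion ε ν ν' k0 kp km ξ 3 * ScalS 1 ε ν ν' ξ +
      -Complex.I * ((‖ξ‖ / ‖ξ‖ₕ : ℝ) : ℂ) * eigenExpansion ε ν ν' k0 kp km ξ 2 := by
  have hn : ((‖ξ‖ : ℝ) : ℂ) ≠ 0 := by exact_mod_cast (hξ.trans_le (horizNorm_le_norm ξ)).ne'
  have hh : ((‖ξ‖ₕ : ℝ) : ℂ) ≠ 0 := by exact_mod_cast hξ.ne'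
  rw [eigenExpansion_three, eigenExpansion_two, ← ScalS_one_add_ScalS_neg_one]
  push_cast
  field_simp
  linear_combination -(kp * ScalS 1 ε ν ν' ξ - km * ScalS (-1) ε ν ν' ξ) * Complex.I_sq

end Eigenvectors

section Bounds

variable {σ ε ν ν' r R : ℝ} {ξ : EuclideanSpace ℝ (Fin 3)}

lemma norm_Epm_le_two (hσ : |σ| = 1) (hS : 0 < Sfun ε ν ν' ξ) (hξ : 0 < ‖ξ‖ₕ) :
    ‖Epm σ ε ν ν' ξ‖ ≤ 2 := by
  nlinarith [sq_norm_Epm hσ hS hξ, norm_nonneg (Epm σ ε ν ν' ξ)]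

lemma norm_le_of_two_mul_Sfun_mul_eq {k c : ℂ} {V : EuclideanSpace ℂ (Fin 4)} (hr : 0 < r)
    (hh : r < ‖ξ‖ₕ) (hR : ‖ξ‖ < R) (hS : 1 / 2 ≤ Sfun ε ν ν' ξ) (hσ : |σ| = 1) (hc : ‖c‖ = 1)
    (hk : 2 * Sfun ε ν ν' ξ * k = V 3 * ScalS σ ε ν ν' ξ + c * ((‖ξ‖ / ‖ξ‖ₕ : ℝ) : ℂ) * V 2) :
    ‖k‖ ≤ (1 + R / r) * ‖V‖ := by
  have hratio : ‖ξ‖ / ‖ξ‖ₕ ≤ R / r :=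
    div_le_div₀ ((norm_nonneg ξ).trans hR.le) hR.le hr hh.le
  calc ‖k‖ ≤ ‖2 * (Sfun ε ν ν' ξ : ℂ) * k‖ := by
        rw [norm_mul, norm_mul, Complex.norm_two, Complex.norm_real,
          Real.norm_of_nonneg (by linarith)]
        nlinarith [norm_nonneg k]
    _ ≤ ‖V 3‖ + ‖ξ‖ / ‖ξ‖ₕ * ‖V 2‖ := by
        rw [hk]
        refine (norm_add_le _ _).trans_eq ?_
        rw [norm_mul, norm_mul, norm_mul, norm_ScalS hσ (by linarith), hc, Complex.norm_real,
          Real.norm_of_nonneg (by positivity), mul_one, one_mul]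
    _ ≤ ‖V‖ + R / r * ‖V‖ :=
        add_le_add (PiLp.norm_apply_le V 3) (mul_le_mul hratio (PiLp.norm_apply_le V 2)
          (norm_nonneg _) ((by positivity : 0 ≤ ‖ξ‖ / ‖ξ‖ₕ).trans hratio))
    _ = (1 + R / r) * ‖V‖ := by ring

variable {k0 kp km : ℂ}

lemma norm_eigenComponents_le (hr : 0 < r) (hh : r < ‖ξ‖ₕ) (hR : ‖ξ‖ < R)
    (hS : 1 / 2 ≤ Sfun ε ν ν' ξ) :
    ‖k0 • E0v ξ‖ ≤ 2 * (1 + R / r) * ‖eigenExpansion ε ν ν' k0 kp km ξ‖ ∧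
      ‖kp • Epm 1 ε ν ν' ξ‖ ≤ 2 * (1 + R / r) * ‖eigenExpansion ε ν ν' k0 kp km ξ‖ ∧
      ‖km • Epm (-1) ε ν ν' ξ‖ ≤ 2 * (1 + R / r) * ‖eigenExpansion ε ν ν' k0 kp km ξ‖ := by
  have hξ : 0 < ‖ξ‖ₕ := hr.trans hh
  have hS0 : 0 < Sfun ε ν ν' ξ := by linarith
  have hRr : 0 < R / r := div_pos (hr.trans (hh.trans_le (horizNorm_le_norm ξ) |>.trans hR)) hr
  have hkp := norm_le_of_two_mul_Sfun_mul_eq hr hh hR hS (σ := -1) (by norm_num) Complex.norm_I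
    (two_mul_Sfun_mul_kp (k0 := k0) (kp := kp) (km := km) hξ)
  have hkm := norm_le_of_two_mul_Sfun_mul_eq hr hh hR hS (σ := 1) (by norm_num) (by simp)
    (two_mul_Sfun_mul_km (k0 := k0) (kp := kp) (km := km) hξ)
  refine ⟨norm_smul_E0v_le_norm_eigenExpansion.trans (le_mul_of_one_le_left (norm_nonneg _)
    (by linarith)), ?_, ?_⟩
  · rw [norm_smul]
    exact (mul_le_mul hkp (norm_Epm_le_two (by norm_num) hS0 hξ) (norm_nonneg _)
      (by positivity)).trans_eq (by ring)
  · rw [norm_smul]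
    exact (mul_le_mul hkm (norm_Epm_le_two (by norm_num) hS0 hξ) (norm_nonneg _)
      (by positivity)).trans_eq (by ring)

end Bounds

lemma lintegral_nnnorm_sq_le_of_norm_le {α E F : Type*} [MeasurableSpace α] {μ : Measure α}
    [NormedAddCommGroup E] [NormedAddCommGroup F] {f : α → E} {g : α → F} {C : ℝ} (hC : 0 ≤ C)
    (hfg : ∀ x, ‖f x‖ ≤ C * ‖g x‖) :
    ∫⁻ x, (‖f x‖₊ : ℝ≥0∞) ^ 2 ∂μ ≤ ENNReal.ofReal C ^ 2 * ∫⁻ x, (‖g x‖₊ : ℝ≥0∞) ^ 2 ∂μ := by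
  rw [← lintegral_const_mul' _ _ (by finiteness)]
  refine lintegral_mono fun x => ?_
  rw [← mul_pow]
  gcongr
  simp only [← enorm_eq_nnnorm, ← ofReal_norm, ← ENNReal.ofReal_mul hC]
  exact ENNReal.ofReal_le_ofReal (hfg x)

/-- Boundedness of the spectral projections on `L²` for fields frequency-localized in
`C_{r,R}`: if `V̂ = k₀ E₀ + k₊ E₊^ε + k₋ E₋^ε` is supported in `C_{r,R}`, then
`‖𝓟_{i,ε} V‖_{L²} ≤ C_{r,R} ‖V‖_{L²}` with `C_{r,R} ≤ C (1 + R^N / r^N)`. -/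
theorem stmt_9 :
    ∃ (N : ℕ) (C0 : ℝ), 0 < C0 ∧
      ∀ (r R ν ν' ε : ℝ), 0 < r → r < R → 0 < ν → 0 < ν' → 0 < ε →
      ∀ k0 kp km : EuclideanSpace ℝ (Fin 3) → ℂ,
        (∀ ξ, ¬(r < Real.sqrt ((ξ 0) ^ 2 + (ξ 1) ^ 2) ∧ ‖ξ‖ < R) →
          k0 ξ = 0 ∧ kp ξ = 0 ∧ km ξ = 0) →
        (∀ ξ : EuclideanSpace ℝ (Fin 3),
          r < Real.sqrt ((ξ 0) ^ 2 + (ξ 1) ^ 2) → ‖ξ‖ < R → 1 / 2 ≤ Sfun ε ν ν' ξ) →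
        (let V : EuclideanSpace ℝ (Fin 3) → EuclideanSpace ℂ (Fin 4) := fun ξ =>
            k0 ξ • E0v ξ + kp ξ • Epm 1 ε ν ν' ξ + km ξ • Epm (-1) ε ν ν' ξ
         (∫⁻ ξ, ((‖k0 ξ • E0v ξ‖₊ : ℝ≥0∞)) ^ 2) ≤
            ENNReal.ofReal (C0 * (1 + R ^ N / r ^ N)) ^ 2 * ∫⁻ ξ, ((‖V ξ‖₊ : ℝ≥0∞)) ^ 2 ∧
         (∫⁻ ξ, ((‖kp ξ • Epm 1 ε ν ν' ξ‖₊ : ℝ≥0∞)) ^ 2) ≤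
            ENNReal.ofReal (C0 * (1 + R ^ N / r ^ N)) ^ 2 * ∫⁻ ξ, ((‖V ξ‖₊ : ℝ≥0∞)) ^ 2 ∧
         (∫⁻ ξ, ((‖km ξ • Epm (-1) ε ν ν' ξ‖₊ : ℝ≥0∞)) ^ 2) ≤
            ENNReal.ofReal (C0 * (1 + R ^ N / r ^ N)) ^ 2 * ∫⁻ ξ, ((‖V ξ‖₊ : ℝ≥0∞)) ^ 2) := by
  refine ⟨1, 2, two_pos, ?_⟩
  intro r R ν ν' ε hr hrR _ _ _ k0 kp km hsupp hS V
  have hC : 0 ≤ 2 * (1 + R ^ 1 / r ^ 1) := by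
    have := hr.trans hrR
    positivity
  have hpointwise : ∀ ξ,
      ‖k0 ξ • E0v ξ‖ ≤ 2 * (1 + R ^ 1 / r ^ 1) * ‖V ξ‖ ∧
        ‖kp ξ • Epm 1 ε ν ν' ξ‖ ≤ 2 * (1 + R ^ 1 / r ^ 1) * ‖V ξ‖ ∧
        ‖km ξ • Epm (-1) ε ν ν' ξ‖ ≤ 2 * (1 + R ^ 1 / r ^ 1) * ‖V ξ‖ := by
    intro ξ
    by_cases hξ : r < ‖ξ‖ₕ ∧ ‖ξ‖ < R
    · rw [pow_one, pow_one]
      exact norm_eigenComponents_le hr hξ.1 hξ.2 (hS ξ hξ.1 hξ.2)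
    · obtain ⟨h0, hp, hm⟩ := hsupp ξ hξ
      simp only [h0, hp, hm, zero_smul, norm_zero, and_self]
      positivity
  exact ⟨lintegral_nnnorm_sq_le_of_norm_le hC fun ξ => (hpointwise ξ).1,
    lintegral_nnnorm_sq_le_of_norm_le hC fun ξ => (hpointwise ξ).2.1,
    lintegral_nnnorm_sq_le_of_norm_le hC fun ξ => (hpointwise ξ).2.2⟩

end
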